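/- arXiv:2305.07888 — 5 statements merged into one kernel-verified Lean document; each statement's English description precedes it below -/
import Mathlib

section
/- (Theorem 1, Conditions for Optimal Domain Generalization.) Assume causal factors are identifiable from inputs via a map φ. Let P^s (source) and P^t (target) be domains with supp(P^t_C) ⊆ supp(P^s_C). Suppose the prediction model Q (1) minimizes the source cross-entropy loss, i.e., ℓ(P^s,Q) ≤ ℓ(P^s,Q') for every prediction model Q', and (2) is causally invariant. Then Q also minimizes the target cross-entropy loss: ℓ(P^t,Q) ≤ ℓ(P^t,Q') for every prediction model Q'. -/
open scoped ENNReal BigOperators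

namespace CLD

/-- Negative logarithm on `ℝ≥0∞`, with the convention `-log 0 = +∞`.
(For `q ∈ (0,1]` this is the usual `-log q`.) -/
noncomputable def neglog (q : ℝ≥0∞) : ℝ≥0∞ :=
  if q = 0 then ⊤ else ENNReal.ofReal (-Real.log q.toReal)

variable {C N X Y : Type*} [Fintype C] [Fintype N] [Fintype X] [Fintype Y]

/-- Causal marginal `P_C(c) = Σ_n P(c,n)` of a domain `P`. -/
noncomputable def causalMarginal (P : PMF (C × N)) (c : C) : ℝ≥0∞ :=
  ∑ n, P (c, n)

/-- Cross-entropy loss of a prediction model `Q` in domain `P`: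
`ℓ(P,Q) = Σ_{c,n,x,y} P(c,n)·G(c,n)(x)·L(c)(y)·(−log Q(x)(y))`,
valued in `[0,∞]` (note `0 * ⊤ = 0` in `ℝ≥0∞`). -/
noncomputable def loss (G : C → N → PMF X) (L : C → PMF Y)
    (P : PMF (C × N)) (Q : X → PMF Y) : ℝ≥0∞ :=
  ∑ c, ∑ n, ∑ x, ∑ y, P (c, n) * G c n x * L c y * neglog (Q x y)

/-- `Q` is causally invariant if it gives the same output on any two inputs
that can be generated from the same causal factor. -/
def CausallyInvariant (G : C → N → PMF X) (Q : X → PMF Y) : Prop :=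
  ∀ c n n' x x', 0 < G c n x → 0 < G c n' x' → Q x = Q x'

/-- Causal factors are identifiable from inputs via `φ`. -/
def Identifiable (G : C → N → PMF X) (φ : X → C) : Prop :=
  ∀ c n x, 0 < G c n x → φ x = c

/-- Shannon entropy of a pmf on a finite type, with the convention `0·(−log 0)=0`
(in `ℝ≥0∞`, `0 * ⊤ = 0`). -/
noncomputable def entropy (p : PMF Y) : ℝ≥0∞ :=
  ∑ y, p y * neglog (p y)

/-! ### Auxiliary lemmas -/

lemma pmf_sum_eq_one {α : Type*} [Fintype α] (p : PMF α) : ∑ a, p a = 1 := by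
  rw [← tsum_fintype (L := SummationFilter.unconditional α)]; exact p.tsum_coe

/-- Real-valued Gibbs inequality. -/
lemma gibbs_real (pr qr : Y → ℝ) (hp0 : ∀ y, 0 ≤ pr y)
    (hq0 : ∀ y, 0 ≤ qr y) (hp1 : ∑ y, pr y = 1) (hq1 : ∑ y, qr y ≤ 1)
    (hpos : ∀ y, 0 < pr y → 0 < qr y) :
    ∑ y, pr y * (-Real.log (pr y)) ≤ ∑ y, pr y * (-Real.log (qr y)) := by
  have key : ∀ y, pr y * (Real.log (qr y) - Real.log (pr y)) ≤ qr y - pr y := by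
    intro y
    rcases eq_or_lt_of_le (hp0 y) with h | h
    · simp [← h]; exact hq0 y
    · have hq := hpos y h
      have hlog : Real.log (qr y) - Real.log (pr y) ≤ qr y / pr y - 1 := by
        rw [← Real.log_div hq.ne' h.ne']
        exact Real.log_le_sub_one_of_pos (div_pos hq h)
      calc pr y * (Real.log (qr y) - Real.log (pr y))
          ≤ pr y * (qr y / pr y - 1) := mul_le_mul_of_nonneg_left hlog (hp0 y)
        _ = qr y - pr y := by field_simp
  have hsum : ∑ y, pr y * (Real.log (qr y) - Real.log (pr y)) ≤ 0 := by
    calc ∑ y, pr y * (Real.log (qr y) - Real.log (pr y))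
        ≤ ∑ y, (qr y - pr y) := Finset.sum_le_sum fun y _ => key y
      _ = (∑ y, qr y) - ∑ y, pr y := Finset.sum_sub_distrib _ _
      _ ≤ 0 := by rw [hp1]; linarith
  have hdiff : ∑ y, pr y * (-Real.log (qr y)) - ∑ y, pr y * (-Real.log (pr y))
      = -∑ y, pr y * (Real.log (qr y) - Real.log (pr y)) := by
    rw [← Finset.sum_sub_distrib, ← Finset.sum_neg_distrib]
    exact Finset.sum_congr rfl fun y _ => by ring
  linarith

/-- Conversion of an `ℝ≥0∞` cross-entropy-type sum to a real sum, when the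
second argument never vanishes on the support of `p`. -/
lemma sum_mul_neglog (p : PMF Y) (s : Y → ℝ≥0∞) (hs1 : ∀ y, s y ≤ 1)
    (hs0 : ∀ y, p y ≠ 0 → s y ≠ 0) :
    ∑ y, p y * neglog (s y)
      = ENNReal.ofReal (∑ y, (p y).toReal * (-Real.log (s y).toReal)) := by
  rw [ENNReal.ofReal_sum_of_nonneg]
  · refine Finset.sum_congr rfl fun y _ => ?_
    by_cases hp : p y = 0
    · simp [hp]
    · have hs := hs0 y hp
      calc p y * neglog (s y)
          = ENNReal.ofReal (p y).toReal * ENNReal.ofReal (-Real.log (s y).toReal) := by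
            rw [neglog, if_neg hs, ENNReal.ofReal_toReal (p.apply_ne_top y)]
        _ = ENNReal.ofReal ((p y).toReal * (-Real.log (s y).toReal)) :=
            (ENNReal.ofReal_mul ENNReal.toReal_nonneg).symm
  · intro y _
    have h1 : (s y).toReal ≤ 1 := by
      have := ENNReal.toReal_mono ENNReal.one_ne_top (hs1 y)
      simpa using this
    have hlog : Real.log (s y).toReal ≤ 0 :=
      Real.log_nonpos ENNReal.toReal_nonneg h1
    exact mul_nonneg ENNReal.toReal_nonneg (by linarith)

/-- Gibbs inequality in `ℝ≥0∞`: the cross entropy of `q` relative to `p`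
is at least the entropy of `p`. -/
lemma entropy_le_crossentropy (p q : PMF Y) :
    entropy p ≤ ∑ y, p y * neglog (q y) := by
  by_cases h : ∀ y, p y ≠ 0 → q y ≠ 0
  · rw [entropy, sum_mul_neglog p p p.coe_le_one (fun _ h => h),
      sum_mul_neglog p q q.coe_le_one h]
    apply ENNReal.ofReal_le_ofReal
    apply gibbs_real
    · exact fun y => ENNReal.toReal_nonneg
    · exact fun y => ENNReal.toReal_nonneg
    · rw [← ENNReal.toReal_sum (fun y _ => p.apply_ne_top y), pmf_sum_eq_one]; simp
    · rw [← ENNReal.toReal_sum (fun y _ => q.apply_ne_top y), pmf_sum_eq_one]; simp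
    · intro y hy
      have hp : p y ≠ 0 := by
        intro h0; rw [h0] at hy; simp at hy
      exact ENNReal.toReal_pos (h y hp) (q.apply_ne_top y)
  · push_neg at h
    obtain ⟨y, hp, hq⟩ := h
    have htop : p y * neglog (q y) = ⊤ := by
      rw [hq, neglog, if_pos rfl, ENNReal.mul_top hp]
    refine le_trans le_top ?_
    rw [← htop]
    exact Finset.single_le_sum (f := fun y => p y * neglog (q y))
      (fun _ _ => zero_le) (Finset.mem_univ y)

lemma entropy_ne_top (p : PMF Y) : entropy p ≠ ⊤ := by
  rw [entropy, sum_mul_neglog p p p.coe_le_one (fun _ h => h)]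
  exact ENNReal.ofReal_ne_top

lemma sum_pmf_mul {α : Type*} [Fintype α] (g : PMF α) (F : α → ℝ≥0∞) (K : ℝ≥0∞)
    (h : ∀ a, g a ≠ 0 → F a = K) : ∑ a, g a * F a = K := by
  have hc : ∀ a ∈ Finset.univ, g a * F a = g a * K := by
    intro a _
    by_cases ha : g a = 0
    · simp [ha]
    · rw [h a ha]
  rw [Finset.sum_congr rfl hc, ← Finset.sum_mul, pmf_sum_eq_one, one_mul]

lemma loss_eq (G : C → N → PMF X) (L : C → PMF Y)
    (P : PMF (C × N)) (Q : X → PMF Y) :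
    loss G L P Q
      = ∑ c, ∑ n, P (c, n) * ∑ x, G c n x * ∑ y, L c y * neglog (Q x y) := by
  simp only [loss, Finset.mul_sum, mul_assoc]

/-- If the inner cross-entropy sum is constant (equal to `K c`) on inputs
generated from `c`, the loss is `∑ c, P_C(c) * K c`. -/
lemma loss_of_const (G : C → N → PMF X) (L : C → PMF Y)
    (P : PMF (C × N)) (Q : X → PMF Y) (K : C → ℝ≥0∞)
    (h : ∀ c n x, G c n x ≠ 0 → (∑ y, L c y * neglog (Q x y)) = K c) :
    loss G L P Q = ∑ c, causalMarginal P c * K c := by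
  rw [loss_eq]
  refine Finset.sum_congr rfl fun c _ => ?_
  rw [causalMarginal, Finset.sum_mul]
  refine Finset.sum_congr rfl fun n _ => ?_
  congr 1
  exact sum_pmf_mul (G c n) _ (K c) (fun x hx => h c n x hx)

/-- Lower bound for the loss of any prediction model. -/
lemma loss_lower_bound (G : C → N → PMF X) (L : C → PMF Y)
    (P : PMF (C × N)) (Q' : X → PMF Y) :
    ∑ c, causalMarginal P c * entropy (L c) ≤ loss G L P Q' := by
  rw [loss_eq]
  refine Finset.sum_le_sum fun c _ => ?_
  rw [causalMarginal, Finset.sum_mul]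
  refine Finset.sum_le_sum fun n _ => ?_
  refine mul_le_mul_right ?_ _
  have h1 : entropy (L c) = ∑ x, G c n x * entropy (L c) := by
    rw [← Finset.sum_mul, pmf_sum_eq_one, one_mul]
  rw [h1]
  exact Finset.sum_le_sum fun x _ =>
    mul_le_mul_right (entropy_le_crossentropy (L c) (Q' x)) _

lemma ennreal_cancel {m a b : ℝ≥0∞} (h0 : m ≠ 0) (ht : m ≠ ⊤)
    (h : m * a = m * b) : a = b := by
  have := congrArg (fun z => m⁻¹ * z) h
  simpa [← mul_assoc, ENNReal.inv_mul_cancel h0 ht] using this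

lemma term_eq_of_sum_le {ι : Type*} [Fintype ι] (a b : ι → ℝ≥0∞)
    (hle : ∀ i, b i ≤ a i) (hsum : ∑ i, a i ≤ ∑ i, b i)
    (hfin : ∑ i, b i ≠ ⊤) : ∀ i, a i = b i := by
  classical
  intro i
  by_contra hne
  have hlt : b i < a i := lt_of_le_of_ne (hle i) (Ne.symm hne)
  have h1 : ∑ j, a j = a i + ∑ j ∈ Finset.univ.erase i, a j :=
    (Finset.add_sum_erase _ _ (Finset.mem_univ i)).symm
  have h2 : ∑ j, b j = b i + ∑ j ∈ Finset.univ.erase i, b j :=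
    (Finset.add_sum_erase _ _ (Finset.mem_univ i)).symm
  have hS : ∑ j ∈ Finset.univ.erase i, b j ≠ ⊤ := by
    intro hT; apply hfin; rw [h2, hT, add_top]
  have hchain : a i + ∑ j ∈ Finset.univ.erase i, b j
      ≤ b i + ∑ j ∈ Finset.univ.erase i, b j := by
    calc a i + ∑ j ∈ Finset.univ.erase i, b j
        ≤ a i + ∑ j ∈ Finset.univ.erase i, a j :=
          add_le_add_right (Finset.sum_le_sum fun j _ => hle j) _
      _ = ∑ j, a j := h1.symm
      _ ≤ ∑ j, b j := hsum
      _ = b i + ∑ j ∈ Finset.univ.erase i, b j := h2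
  have : a i ≤ b i := (ENNReal.add_le_add_iff_right hS).mp hchain
  exact absurd this (not_le.mpr hlt)

lemma causalMarginal_ne_top (P : PMF (C × N)) (c : C) :
    causalMarginal P c ≠ ⊤ :=
  ENNReal.sum_ne_top.mpr fun n _ => P.apply_ne_top (c, n)

/-- **Theorem 1 (Conditions for Optimal Domain Generalization).**
If causal factors are identifiable from inputs, `supp(Pᵗ_C) ⊆ supp(Pˢ_C)`, and the
prediction model `Q` (1) minimizes the source cross-entropy loss among all prediction
models and (2) is causally invariant, then `Q` also minimizes the target
cross-entropy loss among all prediction models. -/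
theorem optimal_dg
    {C N X Y : Type*} [Fintype C] [Fintype N] [Fintype X] [Fintype Y]
    [Nonempty C] [Nonempty N] [Nonempty X] [Nonempty Y]
    (G : C → N → PMF X) (L : C → PMF Y) (φ : X → C)
    (hφ : Identifiable G φ)
    (Ps Pt : PMF (C × N))
    (hsupp : ∀ c, 0 < causalMarginal Pt c → 0 < causalMarginal Ps c)
    (Q : X → PMF Y)
    (hmin : ∀ Q' : X → PMF Y, loss G L Ps Q ≤ loss G L Ps Q')
    (hinv : CausallyInvariant G Q) :
    ∀ Q' : X → PMF Y, loss G L Pt Q ≤ loss G L Pt Q' := by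
  classical
  intro Q'
  obtain ⟨n0⟩ : Nonempty N := inferInstance
  choose x₀ hx₀ using fun c => (G c n0).support_nonempty
  have hx₀' : ∀ c, G c n0 (x₀ c) ≠ 0 := fun c =>
    ((G c n0).mem_support_iff (x₀ c)).mp (hx₀ c)
  set CEQ : C → ℝ≥0∞ := fun c => ∑ y, L c y * neglog (Q (x₀ c) y) with hCEQ
  -- loss of Q in any domain
  have hlossQ : ∀ P : PMF (C × N),
      loss G L P Q = ∑ c, causalMarginal P c * CEQ c := by
    intro P
    refine loss_of_const G L P Q CEQ ?_
    intro c n x hx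
    have hQx : Q x = Q (x₀ c) :=
      hinv c n n0 x (x₀ c) (pos_iff_ne_zero.mpr hx) (pos_iff_ne_zero.mpr (hx₀' c))
    rw [hQx]
  -- loss of the "oracle" model in any domain
  have hopt : ∀ P : PMF (C × N),
      loss G L P (fun x => L (φ x)) = ∑ c, causalMarginal P c * entropy (L c) := by
    intro P
    refine loss_of_const G L P _ (fun c => entropy (L c)) ?_
    intro c n x hx
    rw [hφ c n x (pos_iff_ne_zero.mpr hx)]
    rfl
  have hfinM : (∑ c, causalMarginal Ps c * entropy (L c)) ≠ ⊤ :=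
    ENNReal.sum_ne_top.mpr fun c _ =>
      ENNReal.mul_ne_top (causalMarginal_ne_top Ps c) (entropy_ne_top (L c))
  have hQle : ∑ c, causalMarginal Ps c * CEQ c
      ≤ ∑ c, causalMarginal Ps c * entropy (L c) := by
    rw [← hlossQ Ps, ← hopt Ps]; exact hmin _
  have hterm : ∀ c,
      causalMarginal Ps c * CEQ c = causalMarginal Ps c * entropy (L c) :=
    term_eq_of_sum_le _ _
      (fun c => mul_le_mul_right (entropy_le_crossentropy (L c) (Q (x₀ c))) _)
      hQle hfinM
  have hCE : ∀ c, causalMarginal Pt c ≠ 0 → CEQ c = entropy (L c) := by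
    intro c hc
    have hs : causalMarginal Ps c ≠ 0 := (hsupp c (pos_iff_ne_zero.mpr hc)).ne'
    exact ennreal_cancel hs (causalMarginal_ne_top Ps c) (hterm c)
  calc loss G L Pt Q = ∑ c, causalMarginal Pt c * CEQ c := hlossQ Pt
    _ = ∑ c, causalMarginal Pt c * entropy (L c) := by
        refine Finset.sum_congr rfl fun c _ => ?_
        by_cases hc : causalMarginal Pt c = 0
        · simp [hc]
        · rw [hCE c hc]
    _ ≤ loss G L Pt Q' := loss_lower_bound G L Pt Q'

end CLD
end

section
/- (Loss decomposition for causally invariant models, the key identity in the proof of Theorem 1.) Let Q be a causally invariant prediction model and let Q̄ be any map from 𝒞 to probability mass functions on 𝒴 such that Q(x) = Q̄(c) whenever G(c,n)(x) > 0. Then for every domain P, ℓ(P,Q) = Σ_c P_C(c) · Σ_y L(c)(y)·(−log Q̄(c)(y)). In particular the loss depends on P only through its causal marginal P_C. -/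
open scoped ENNReal BigOperators

namespace CLD

variable {C N X Y : Type*} [Fintype C] [Fintype N] [Fintype X] [Fintype Y]

/-- **Loss decomposition for causally invariant models.** If `Q` is causally invariant
and `Q̄` satisfies `Q(x) = Q̄(c)` whenever `G(c,n)(x) > 0`, then for every domain `P`,
`ℓ(P,Q) = Σ_c P_C(c) · Σ_y L(c)(y)·(−log Q̄(c)(y))`; in particular the loss depends on
`P` only through its causal marginal. -/
theorem loss_decomposition
    {C N X Y : Type*} [Fintype C] [Fintype N] [Fintype X] [Fintype Y]
    [Nonempty C] [Nonempty N] [Nonempty X] [Nonempty Y]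
    (G : C → N → PMF X) (L : C → PMF Y)
    (Q : X → PMF Y) (hinv : CausallyInvariant G Q)
    (Qbar : C → PMF Y)
    (hQbar : ∀ c n x, 0 < G c n x → Q x = Qbar c)
    (P : PMF (C × N)) :
    loss G L P Q = ∑ c, causalMarginal P c * ∑ y, L c y * neglog (Qbar c y) := by
  have key : ∀ c n, ∑ x, ∑ y, P (c, n) * G c n x * L c y * neglog (Q x y)
      = P (c, n) * ∑ y, L c y * neglog (Qbar c y) := by
    intro c n
    have hG : ∑ x, G c n x = 1 := by
      have := (G c n).tsum_coe
      rwa [tsum_fintype] at this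
    calc ∑ x, ∑ y, P (c, n) * G c n x * L c y * neglog (Q x y)
        = ∑ x, G c n x * (P (c, n) * ∑ y, L c y * neglog (Qbar c y)) := by
          refine Finset.sum_congr rfl fun x _ => ?_
          by_cases h : G c n x = 0
          · simp [h]
          · rw [hQbar c n x (pos_iff_ne_zero.mpr h), Finset.mul_sum, Finset.mul_sum]
            refine Finset.sum_congr rfl fun y _ => ?_
            ring
      _ = (∑ x, G c n x) * (P (c, n) * ∑ y, L c y * neglog (Qbar c y)) := by
          rw [Finset.sum_mul]
      _ = P (c, n) * ∑ y, L c y * neglog (Qbar c y) := by rw [hG, one_mul]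
  unfold loss causalMarginal
  refine Finset.sum_congr rfl fun c _ => ?_
  rw [Finset.sum_mul]
  exact Finset.sum_congr rfl fun n _ => key c n

end CLD
end

section
/- (Domain independence of the loss of causally invariant models.) If the prediction model Q is causally invariant and P, P' are two domains with the same causal marginal, P_C = P'_C, then ℓ(P,Q) = ℓ(P',Q). That is, the cross-entropy loss of a causally invariant model does not depend on the joint distribution of causal and non-causal factors beyond the distribution of the causal factors. -/
open scoped ENNReal BigOperators

namespace CLD

variable {C N X Y : Type*} [Fintype C] [Fintype N] [Fintype X] [Fintype Y]

/-- **Domain independence of the loss of causally invariant models.** If `Q` is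
causally invariant and `P`, `P'` have the same causal marginal, then
`ℓ(P,Q) = ℓ(P',Q)`. -/
theorem loss_depends_only_on_causal_marginal
    {C N X Y : Type*} [Fintype C] [Fintype N] [Fintype X] [Fintype Y]
    [Nonempty C] [Nonempty N] [Nonempty X] [Nonempty Y]
    (G : C → N → PMF X) (L : C → PMF Y)
    (Q : X → PMF Y) (hinv : CausallyInvariant G Q)
    (P P' : PMF (C × N))
    (hmarg : ∀ c, causalMarginal P c = causalMarginal P' c) :
    loss G L P Q = loss G L P' Q := by
  classical
  obtain ⟨n₀⟩ := ‹Nonempty N›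
  choose x₀ hx₀ using fun c => (G c n₀).support_nonempty
  have key : ∀ c n, (∑ x, ∑ y, G c n x * L c y * neglog (Q x y))
      = ∑ y, L c y * neglog (Q (x₀ c) y) := by
    intro c n
    have hsum : (∑ x, G c n x) = 1 := by
      rw [← tsum_fintype (L := SummationFilter.unconditional X)]; exact (G c n).tsum_coe
    calc ∑ x, ∑ y, G c n x * L c y * neglog (Q x y)
        = ∑ x, G c n x * ∑ y, L c y * neglog (Q (x₀ c) y) := by
          refine Finset.sum_congr rfl (fun x _ => ?_)
          by_cases h : G c n x = 0
          · simp [h]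
          · have hQ : Q x = Q (x₀ c) :=
              hinv c n n₀ x (x₀ c) (pos_iff_ne_zero.mpr h)
                (pos_iff_ne_zero.mpr (hx₀ c))
            rw [Finset.mul_sum]
            exact Finset.sum_congr rfl (fun y _ => by rw [hQ, mul_assoc])
      _ = (∑ x, G c n x) * ∑ y, L c y * neglog (Q (x₀ c) y) := by
          rw [Finset.sum_mul]
      _ = ∑ y, L c y * neglog (Q (x₀ c) y) := by rw [hsum, one_mul]
  have main : ∀ Pd : PMF (C × N), loss G L Pd Q
      = ∑ c, causalMarginal Pd c * ∑ y, L c y * neglog (Q (x₀ c) y) := by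
    intro Pd
    unfold loss causalMarginal
    refine Finset.sum_congr rfl (fun c _ => ?_)
    rw [Finset.sum_mul]
    refine Finset.sum_congr rfl (fun n _ => ?_)
    rw [← key c n, Finset.mul_sum]
    refine Finset.sum_congr rfl (fun x _ => ?_)
    rw [Finset.mul_sum]
    refine Finset.sum_congr rfl (fun y _ => ?_)
    ring
  rw [main P, main P']
  exact Finset.sum_congr rfl (fun c _ => by rw [hmarg c])

end CLD
end

section
/- (The Bayes predictor built from causal factors is a causally invariant minimizer in every domain.) Assume causal factors are identifiable from inputs via a map φ, and define the prediction model Q* by Q*(x) = L(φ(x)). Then Q* is causally invariant, and for every domain P its loss attains the entropy lower bound: ℓ(P,Q*) = Σ_c P_C(c)·H(L(c)). Consequently, Q* minimizes ℓ(P,·) over all prediction models simultaneously in every domain P. -/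
open scoped ENNReal BigOperators

namespace CLD

variable {C N X Y : Type*} [Fintype C] [Fintype N] [Fintype X] [Fintype Y]

lemma real_gibbs {α : Type*} [Fintype α] (f g : α → ℝ)
    (hf : ∀ y, 0 ≤ f y) (hg : ∀ y, 0 ≤ g y) (hg1 : ∀ y, g y ≤ 1)
    (hfg : ∀ y, f y ≠ 0 → g y ≠ 0)
    (hfs : ∑ y, f y = 1) (hgs : ∑ y, g y = 1) :
    ∑ y, f y * (-Real.log (f y)) ≤ ∑ y, f y * (-Real.log (g y)) := by
  set s := Finset.univ.filter (fun y => f y ≠ 0) with hs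
  have hmem : ∀ y, y ∈ s ↔ f y ≠ 0 := by intro y; simp [hs]
  have hfsum : ∑ y ∈ s, f y = 1 := by
    rw [← hfs]
    exact Finset.sum_subset (Finset.subset_univ s)
      (fun y _ hy => by have := (hmem y).not.1 hy; simpa using this)
  have hgsum : ∑ y ∈ s, g y ≤ 1 := by
    rw [← hgs]
    exact Finset.sum_le_sum_of_subset_of_nonneg (Finset.subset_univ s)
      (fun y _ _ => hg y)
  have hLHS : ∑ y, f y * (-Real.log (f y)) = ∑ y ∈ s, f y * (-Real.log (f y)) :=
    (Finset.sum_subset (Finset.subset_univ s)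
      (fun y _ hy => by have := (hmem y).not.1 hy; push_neg at this; simp [this])).symm
  have hnonneg : ∀ y, 0 ≤ f y * (-Real.log (g y)) := fun y =>
    mul_nonneg (hf y) (neg_nonneg.2 (Real.log_nonpos (hg y) (hg1 y)))
  have key : ∀ y ∈ s, f y * (-Real.log (f y)) ≤ f y * (-Real.log (g y)) + (g y - f y) := by
    intro y hy
    have hf0 : 0 < f y := (hf y).lt_of_ne (Ne.symm ((hmem y).1 hy))
    have hg0 : 0 < g y := (hg y).lt_of_ne (Ne.symm (hfg y ((hmem y).1 hy)))
    have hlog := Real.log_le_sub_one_of_pos (div_pos hg0 hf0)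
    rw [Real.log_div hg0.ne' hf0.ne'] at hlog
    have h2 := mul_le_mul_of_nonneg_left hlog (hf y)
    have heq : f y * (g y / f y - 1) = g y - f y := by field_simp
    rw [heq, mul_sub] at h2
    simp only [mul_neg]
    linarith
  calc ∑ y, f y * (-Real.log (f y))
      = ∑ y ∈ s, f y * (-Real.log (f y)) := hLHS
    _ ≤ ∑ y ∈ s, (f y * (-Real.log (g y)) + (g y - f y)) := Finset.sum_le_sum key
    _ = ∑ y ∈ s, f y * (-Real.log (g y)) + (∑ y ∈ s, g y - ∑ y ∈ s, f y) := by
        rw [Finset.sum_add_distrib, Finset.sum_sub_distrib]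
    _ ≤ ∑ y ∈ s, f y * (-Real.log (g y)) := by
        have : ∑ y ∈ s, g y - ∑ y ∈ s, f y ≤ 0 := by rw [hfsum]; linarith
        linarith
    _ ≤ ∑ y, f y * (-Real.log (g y)) :=
        Finset.sum_le_sum_of_subset_of_nonneg (Finset.subset_univ s)
          (fun y _ _ => hnonneg y)

lemma gibbs {α : Type*} [Fintype α] (p q : PMF α) :
    entropy p ≤ ∑ y, p y * neglog (q y) := by
  by_cases hex : ∃ y, p y ≠ 0 ∧ q y = 0
  · obtain ⟨y, hp, hq⟩ := hex
    have hterm : p y * neglog (q y) = ⊤ := by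
      simp [neglog, hq, ENNReal.mul_top hp]
    have : ∑ y, p y * neglog (q y) = ⊤ :=
      ENNReal.sum_eq_top.2 ⟨y, Finset.mem_univ y, hterm⟩
    simp [this]
  · push_neg at hex
    set f : α → ℝ := fun y => (p y).toReal with hfdef
    set g : α → ℝ := fun y => (q y).toReal with hgdef
    have hpne : ∀ y, p y ≠ ⊤ := fun y => p.apply_ne_top y
    have hqne : ∀ y, q y ≠ ⊤ := fun y => q.apply_ne_top y
    have hf : ∀ y, 0 ≤ f y := fun y => ENNReal.toReal_nonneg
    have hg : ∀ y, 0 ≤ g y := fun y => ENNReal.toReal_nonneg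
    have hf1 : ∀ y, f y ≤ 1 := fun y => by
      simpa using ENNReal.toReal_mono (by simp) (p.coe_le_one y)
    have hg1 : ∀ y, g y ≤ 1 := fun y => by
      simpa using ENNReal.toReal_mono (by simp) (q.coe_le_one y)
    have hfg : ∀ y, f y ≠ 0 → g y ≠ 0 := by
      intro y hfy
      have hpy : p y ≠ 0 := fun h => hfy (by simp [hfdef, h])
      have := hex y hpy
      simp [hgdef, ENNReal.toReal_eq_zero_iff, this, hqne y]
    have hfs : ∑ y, f y = 1 := by
      rw [hfdef]
      have := ENNReal.toReal_sum (s := Finset.univ) (f := fun y => p y)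
        (fun a _ => hpne a)
      rw [← this, pmf_sum_eq_one p]; simp
    have hgs : ∑ y, g y = 1 := by
      rw [hgdef]
      have := ENNReal.toReal_sum (s := Finset.univ) (f := fun y => q y)
        (fun a _ => hqne a)
      rw [← this, pmf_sum_eq_one q]; simp
    have hterm1 : ∀ y, p y * neglog (p y) = ENNReal.ofReal (f y * (-Real.log (f y))) := by
      intro y
      by_cases hp0 : p y = 0
      · simp [hp0, hfdef, neglog]
      · rw [neglog, if_neg hp0,
          ENNReal.ofReal_mul (hf y), ENNReal.ofReal_toReal (hpne y)]
    have hterm2 : ∀ y, p y * neglog (q y) = ENNReal.ofReal (f y * (-Real.log (g y))) := by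
      intro y
      by_cases hp0 : p y = 0
      · simp [hp0, hfdef, neglog]
      · have hq0 : q y ≠ 0 := hex y hp0
        rw [neglog, if_neg hq0, ← ENNReal.ofReal_toReal (hpne y),
          ← ENNReal.ofReal_mul (hf y)]
    rw [entropy]
    simp only [hterm1, hterm2]
    rw [← ENNReal.ofReal_sum_of_nonneg
        (fun y _ => mul_nonneg (hf y) (neg_nonneg.2 (Real.log_nonpos (hf y) (hf1 y)))),
      ← ENNReal.ofReal_sum_of_nonneg
        (fun y _ => mul_nonneg (hf y) (neg_nonneg.2 (Real.log_nonpos (hg y) (hg1 y))))]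
    exact ENNReal.ofReal_le_ofReal (real_gibbs f g hf hg hg1 hfg hfs hgs)

/-- **The Bayes predictor built from causal factors is a causally invariant minimizer
in every domain.** If causal factors are identifiable via `φ` and `Q* := fun x => L (φ x)`,
then `Q*` is causally invariant, its loss in every domain `P` equals
`Σ_c P_C(c)·H(L(c))`, and it minimizes the loss over all prediction models
simultaneously in every domain. -/
theorem bayes_predictor_optimal
    {C N X Y : Type*} [Fintype C] [Fintype N] [Fintype X] [Fintype Y]
    [Nonempty C] [Nonempty N] [Nonempty X] [Nonempty Y]
    (G : C → N → PMF X) (L : C → PMF Y) (φ : X → C)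
    (hφ : Identifiable G φ) :
    CausallyInvariant G (fun x => L (φ x)) ∧
      ∀ P : PMF (C × N),
        loss G L P (fun x => L (φ x)) = ∑ c, causalMarginal P c * entropy (L c) ∧
        ∀ Q' : X → PMF Y, loss G L P (fun x => L (φ x)) ≤ loss G L P Q' := by
  have hloss_eq : ∀ (Q : X → PMF Y) (P : PMF (C × N)),
      loss G L P Q = ∑ c, ∑ n, ∑ x, P (c, n) * G c n x * (∑ y, L c y * neglog (Q x y)) := by
    intro Q P
    unfold loss
    refine Finset.sum_congr rfl (fun c _ => Finset.sum_congr rfl (fun n _ =>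
      Finset.sum_congr rfl (fun x _ => ?_)))
    rw [Finset.mul_sum]
    exact Finset.sum_congr rfl (fun y _ => by ring)
  have hmid : ∀ P : PMF (C × N),
      ∑ c, ∑ n, ∑ x, P (c, n) * G c n x * entropy (L c)
        = ∑ c, causalMarginal P c * entropy (L c) := by
    intro P
    refine Finset.sum_congr rfl (fun c _ => ?_)
    rw [causalMarginal, Finset.sum_mul]
    refine Finset.sum_congr rfl (fun n _ => ?_)
    have : ∑ x, P (c, n) * G c n x * entropy (L c)
        = (P (c, n) * entropy (L c)) * ∑ x, G c n x := by
      rw [Finset.mul_sum]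
      exact Finset.sum_congr rfl (fun x _ => by ring)
    rw [this, pmf_sum_eq_one, mul_one]
  constructor
  · intro c n n' x x' h1 h2
    have e1 := hφ c n x h1
    have e2 := hφ c n' x' h2
    simp [e1, e2]
  · intro P
    have heq : loss G L P (fun x => L (φ x)) = ∑ c, causalMarginal P c * entropy (L c) := by
      rw [hloss_eq, ← hmid P]
      refine Finset.sum_congr rfl (fun c _ => Finset.sum_congr rfl (fun n _ =>
        Finset.sum_congr rfl (fun x _ => ?_)))
      by_cases hG : G c n x = 0
      · simp [hG]
      · have : φ x = c := hφ c n x (pos_iff_ne_zero.2 hG)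
        rw [this, entropy]
    refine ⟨heq, fun Q' => ?_⟩
    rw [heq, ← hmid P, hloss_eq]
    refine Finset.sum_le_sum (fun c _ => Finset.sum_le_sum (fun n _ =>
      Finset.sum_le_sum (fun x _ => ?_)))
    exact mul_le_mul_right (gibbs (L c) (Q' x)) _

end CLD
end

section
/- (Characterization of causally invariant source-loss minimizers on the source support.) Assume causal factors are identifiable from inputs via a map φ. Let P^s be a domain and let Q be a causally invariant prediction model with ℓ(P^s,Q) ≤ ℓ(P^s,Q') for every prediction model Q'. Then for every x ∈ 𝒳 that has positive probability under the source domain (i.e., there exist c, n with P^s(c,n) > 0 and G(c,n)(x) > 0), the model's output recovers the true labeling mechanism: Q(x) = L(φ(x)). -/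
open scoped ENNReal BigOperators

namespace CLD

variable {C N X Y : Type*} [Fintype C] [Fintype N] [Fintype X] [Fintype Y]

/-! ### Auxiliary lemmas: Gibbs' inequality -/

section Aux

set_option linter.unusedSectionVars false

lemma gibbs_term {P Q : ℝ} (hp : 0 < P) (hq : 0 < Q) :
    P * Real.log Q - P * Real.log P ≤ Q - P := by
  have hlog : Real.log (Q / P) ≤ Q / P - 1 := Real.log_le_sub_one_of_pos (div_pos hq hp)
  have hdiv : Real.log (Q / P) = Real.log Q - Real.log P := Real.log_div hq.ne' hp.ne'
  have h2 : P * Real.log (Q / P) ≤ P * (Q / P - 1) :=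
    mul_le_mul_of_nonneg_left hlog hp.le
  have h3 : P * (Q / P - 1) = Q - P := by field_simp
  rw [hdiv] at h2
  nlinarith

lemma gibbs_term_eq {P Q : ℝ} (hp : 0 < P) (hq : 0 < Q)
    (h : P * Real.log Q - P * Real.log P = Q - P) : Q = P := by
  by_contra hne
  have hr : Q / P ≠ 1 := by
    intro h1; exact hne (by field_simp at h1; linarith)
  have hlog : Real.log (Q / P) < Q / P - 1 := Real.log_lt_sub_one_of_pos (div_pos hq hp) hr
  have hdiv : Real.log (Q / P) = Real.log Q - Real.log P := Real.log_div hq.ne' hp.ne'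
  have h2 : P * Real.log (Q / P) < P * (Q / P - 1) := mul_lt_mul_of_pos_left hlog hp
  have h3 : P * (Q / P - 1) = Q - P := by field_simp
  rw [hdiv] at h2
  nlinarith

lemma real_gibbs_le {s : Finset Y} {P Q : Y → ℝ}
    (hP : ∀ y ∈ s, 0 < P y) (hQ : ∀ y ∈ s, 0 < Q y)
    (hPs : ∑ y ∈ s, P y = 1) (hQs : ∑ y ∈ s, Q y ≤ 1) :
    ∑ y ∈ s, P y * Real.log (Q y) ≤ ∑ y ∈ s, P y * Real.log (P y) := by
  have key : ∀ y ∈ s, P y * Real.log (Q y) - P y * Real.log (P y) ≤ Q y - P y :=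
    fun y hy => gibbs_term (hP y hy) (hQ y hy)
  have h1 := Finset.sum_le_sum key
  rw [Finset.sum_sub_distrib, Finset.sum_sub_distrib, hPs] at h1
  linarith

lemma real_gibbs_eq {s : Finset Y} {P Q : Y → ℝ}
    (hP : ∀ y ∈ s, 0 < P y) (hQ : ∀ y ∈ s, 0 < Q y)
    (hPs : ∑ y ∈ s, P y = 1) (hQs : ∑ y ∈ s, Q y ≤ 1)
    (h : ∑ y ∈ s, P y * Real.log (P y) ≤ ∑ y ∈ s, P y * Real.log (Q y)) :
    ∀ y ∈ s, Q y = P y := by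
  have key : ∀ y ∈ s, P y * Real.log (Q y) - P y * Real.log (P y) ≤ Q y - P y :=
    fun y hy => gibbs_term (hP y hy) (hQ y hy)
  have h1 := Finset.sum_le_sum key
  have h2 : ∑ y ∈ s, (Q y - P y) ≤ 0 := by rw [Finset.sum_sub_distrib, hPs]; linarith
  have h3 : (0:ℝ) ≤ ∑ y ∈ s, (P y * Real.log (Q y) - P y * Real.log (P y)) := by
    rw [Finset.sum_sub_distrib]; linarith
  have heq : ∑ y ∈ s, (P y * Real.log (Q y) - P y * Real.log (P y))
      = ∑ y ∈ s, (Q y - P y) := le_antisymm h1 (by linarith)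
  have := (Finset.sum_eq_sum_iff_of_le key).mp heq
  intro y hy
  exact gibbs_term_eq (hP y hy) (hQ y hy) (this y hy)

lemma neglog_nonneg_arg {q : ℝ≥0∞} (hq1 : q ≤ 1) : 0 ≤ -Real.log q.toReal := by
  have h1 : q.toReal ≤ 1 := by
    have := ENNReal.toReal_mono (by simp) hq1
    simpa using this
  have := Real.log_nonpos ENNReal.toReal_nonneg h1
  linarith

/-- Conversion of the (pointwise finite) cross-entropy sum to a real sum over the
support of `p`. -/
lemma ce_eq_ofReal (p q : PMF Y) (hq : ∀ y, p y ≠ 0 → q y ≠ 0) :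
    ∑ y, p y * neglog (q y)
      = ENNReal.ofReal (∑ y ∈ Finset.univ.filter (fun y => p y ≠ 0),
          (p y).toReal * (-Real.log (q y).toReal)) := by
  classical
  rw [← Finset.sum_filter_of_ne (p := fun y => p y ≠ 0)
      (f := fun y => p y * neglog (q y)) (by intro y _ h hy; simp [hy] at h)]
  rw [ENNReal.ofReal_sum_of_nonneg]
  · apply Finset.sum_congr rfl
    intro y hy
    simp only [Finset.mem_filter] at hy
    rw [neglog, if_neg (hq y hy.2)]
    rw [ENNReal.ofReal_mul ENNReal.toReal_nonneg, ENNReal.ofReal_toReal (p.apply_ne_top y)]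
  · intro y hy
    simp only [Finset.mem_filter] at hy
    exact mul_nonneg ENNReal.toReal_nonneg (neglog_nonneg_arg (q.coe_le_one y))

lemma sum_toReal_filter (p : PMF Y) :
    ∑ y ∈ Finset.univ.filter (fun y => p y ≠ 0), (p y).toReal = 1 := by
  classical
  rw [Finset.sum_filter_of_ne (by intro y _ h hy; simp [hy] at h)]
  rw [← ENNReal.toReal_sum (fun y _ => p.apply_ne_top y)]
  rw [show ∑ y, p y = 1 from by rw [← tsum_fintype (L := SummationFilter.unconditional _)]; exact p.tsum_coe]
  simp

lemma sum_toReal_le_one (p : PMF Y) (s : Finset Y) :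
    ∑ y ∈ s, (p y).toReal ≤ 1 := by
  have h1 : ∑ y ∈ s, (p y).toReal ≤ ∑ y, (p y).toReal :=
    Finset.sum_le_sum_of_subset_of_nonneg (Finset.subset_univ s)
      (fun _ _ _ => ENNReal.toReal_nonneg)
  have h2 : ∑ y, (p y).toReal = 1 := by
    rw [← ENNReal.toReal_sum (fun y _ => p.apply_ne_top y)]
    rw [show ∑ y, p y = 1 from by rw [← tsum_fintype (L := SummationFilter.unconditional _)]; exact p.tsum_coe]; simp
  linarith

/-- Gibbs' inequality: the cross entropy dominates the entropy. -/
lemma ce_ge (p q : PMF Y) :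
    ∑ y, p y * neglog (p y) ≤ ∑ y, p y * neglog (q y) := by
  classical
  by_cases hq : ∀ y, p y ≠ 0 → q y ≠ 0
  · rw [ce_eq_ofReal p p (fun _ h => h), ce_eq_ofReal p q hq]
    apply ENNReal.ofReal_le_ofReal
    have := real_gibbs_le (s := Finset.univ.filter (fun y => p y ≠ 0))
      (P := fun y => (p y).toReal) (Q := fun y => (q y).toReal)
      (fun y hy => ENNReal.toReal_pos (by simpa using (Finset.mem_filter.mp hy).2)
        (p.apply_ne_top y))
      (fun y hy => ENNReal.toReal_pos (hq y (Finset.mem_filter.mp hy).2)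
        (q.apply_ne_top y))
      (sum_toReal_filter p) (sum_toReal_le_one q _)
    have e : ∀ (R : Y → ℝ), ∑ y ∈ Finset.univ.filter (fun y => p y ≠ 0),
        (p y).toReal * (-(R y)) = -∑ y ∈ Finset.univ.filter (fun y => p y ≠ 0),
        (p y).toReal * R y := by
      intro R; rw [← Finset.sum_neg_distrib]; apply Finset.sum_congr rfl; intros; ring
    calc ∑ y ∈ Finset.univ.filter (fun y => p y ≠ 0),
          (p y).toReal * (-Real.log (p y).toReal)
        = -∑ y ∈ Finset.univ.filter (fun y => p y ≠ 0),
          (p y).toReal * Real.log (p y).toReal := e _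
      _ ≤ -∑ y ∈ Finset.univ.filter (fun y => p y ≠ 0),
          (p y).toReal * Real.log (q y).toReal := by linarith
      _ = _ := (e _).symm
  · push_neg at hq
    obtain ⟨y₀, hp0, hq0⟩ := hq
    have : ∑ y, p y * neglog (q y) = ⊤ := by
      apply ENNReal.sum_eq_top.mpr
      exact ⟨y₀, Finset.mem_univ _, by rw [neglog, if_pos hq0, ENNReal.mul_top hp0]⟩
    simp [this]

/-- Equality case of Gibbs' inequality: if the cross entropy is at most the entropy,
the two distributions coincide. -/
lemma ce_eq_of_le (p q : PMF Y)
    (h : ∑ y, p y * neglog (q y) ≤ ∑ y, p y * neglog (p y)) : q = p := by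
  classical
  set s : Finset Y := Finset.univ.filter (fun y => p y ≠ 0) with hs
  have hfin : ∑ y, p y * neglog (p y) ≠ ⊤ := by
    rw [ce_eq_ofReal p p (fun _ h => h)]; exact ENNReal.ofReal_ne_top
  have hlfin : ∑ y, p y * neglog (q y) ≠ ⊤ := fun ht => hfin (top_le_iff.mp (ht ▸ h))
  have hq : ∀ y, p y ≠ 0 → q y ≠ 0 := by
    intro y hp0 hq0
    apply hlfin
    apply ENNReal.sum_eq_top.mpr
    exact ⟨y, Finset.mem_univ _, by rw [neglog, if_pos hq0, ENNReal.mul_top hp0]⟩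
  rw [ce_eq_ofReal p p (fun _ h => h), ce_eq_ofReal p q hq] at h
  have hnn : 0 ≤ ∑ y ∈ s, (p y).toReal * (-Real.log (p y).toReal) :=
    Finset.sum_nonneg fun y _ =>
      mul_nonneg ENNReal.toReal_nonneg (neglog_nonneg_arg (p.coe_le_one y))
  have hreal := (ENNReal.ofReal_le_ofReal_iff hnn).mp h
  have e : ∀ (R : Y → ℝ), ∑ y ∈ s, (p y).toReal * (-(R y))
      = -∑ y ∈ s, (p y).toReal * R y := by
    intro R; rw [← Finset.sum_neg_distrib]; apply Finset.sum_congr rfl; intros; ring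
  rw [e (fun y => Real.log (p y).toReal), e (fun y => Real.log (q y).toReal)] at hreal
  have hlog : ∑ y ∈ s, (p y).toReal * Real.log (p y).toReal
      ≤ ∑ y ∈ s, (p y).toReal * Real.log (q y).toReal := by linarith
  have hPpos : ∀ y ∈ s, 0 < (p y).toReal := fun y hy =>
    ENNReal.toReal_pos (by simpa [hs] using (Finset.mem_filter.mp hy).2) (p.apply_ne_top y)
  have hQpos : ∀ y ∈ s, 0 < (q y).toReal := fun y hy =>
    ENNReal.toReal_pos (hq y (Finset.mem_filter.mp hy).2) (q.apply_ne_top y)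
  have hmain := real_gibbs_eq hPpos hQpos (sum_toReal_filter p) (sum_toReal_le_one q _) hlog
  have hsumq : ∑ y, (q y).toReal = 1 := by
    rw [← ENNReal.toReal_sum (fun y _ => q.apply_ne_top y)]
    rw [show ∑ y, q y = 1 from by rw [← tsum_fintype (L := SummationFilter.unconditional _)]; exact q.tsum_coe]; simp
  have hsq : ∑ y ∈ s, (q y).toReal = 1 := by
    rw [Finset.sum_congr rfl hmain]; exact sum_toReal_filter p
  have hcompl : ∑ y ∈ Finset.univ \ s, (q y).toReal = 0 := by
    have := Finset.sum_sdiff (f := fun y => (q y).toReal) (Finset.subset_univ s)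
    rw [hsq, hsumq] at this; linarith
  have hzero : ∀ y ∈ Finset.univ \ s, (q y).toReal = 0 :=
    (Finset.sum_eq_zero_iff_of_nonneg (fun y _ => ENNReal.toReal_nonneg)).mp hcompl
  ext y
  by_cases hy : p y = 0
  · have hy' : y ∈ Finset.univ \ s := by simp [hs, hy]
    have := hzero y hy'
    rw [ENNReal.toReal_eq_zero_iff] at this
    rcases this with h0 | ht
    · rw [h0, hy]
    · exact absurd ht (q.apply_ne_top y)
  · have hy' : y ∈ s := by simp [hs, hy]
    exact (ENNReal.toReal_eq_toReal_iff' (q.apply_ne_top y) (p.apply_ne_top y)).mp (hmain y hy')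

/-- Extract a pointwise inequality from an inequality of sums with a pointwise
reverse inequality and a finite bound. -/
lemma point_le {ι : Type*} [Fintype ι] {t u : ι → ℝ≥0∞}
    (hpt : ∀ i, u i ≤ t i) (hsum : ∑ i, t i ≤ ∑ i, u i) (hfin : ∑ i, u i ≠ ⊤) (i₀ : ι) :
    t i₀ ≤ u i₀ := by
  classical
  have hu' : ∑ i ∈ Finset.univ.erase i₀, u i ≠ ⊤ := by
    intro ht
    exact hfin (top_le_iff.mp (ht ▸ Finset.sum_le_sum_of_subset (Finset.erase_subset _ _)))
  have h1 : t i₀ + ∑ i ∈ Finset.univ.erase i₀, u i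
      ≤ t i₀ + ∑ i ∈ Finset.univ.erase i₀, t i :=
    add_le_add_right (Finset.sum_le_sum fun i _ => hpt i) _
  rw [Finset.add_sum_erase _ t (Finset.mem_univ i₀)] at h1
  have h2 : t i₀ + ∑ i ∈ Finset.univ.erase i₀, u i ≤ ∑ i, u i := h1.trans hsum
  rw [← Finset.add_sum_erase _ u (Finset.mem_univ i₀)] at h2
  exact (ENNReal.add_le_add_iff_right hu').mp h2

end Aux

/-- **Characterization of causally invariant source-loss minimizers on the source
support.** If causal factors are identifiable via `φ` and the causally invariant `Q`
minimizes the source loss among all prediction models, then `Q(x) = L(φ(x))` for every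
input `x` with positive probability under the source domain. -/
theorem minimizer_recovers_labeling_on_support
    {C N X Y : Type*} [Fintype C] [Fintype N] [Fintype X] [Fintype Y]
    [Nonempty C] [Nonempty N] [Nonempty X] [Nonempty Y]
    (G : C → N → PMF X) (L : C → PMF Y) (φ : X → C)
    (hφ : Identifiable G φ)
    (Ps : PMF (C × N))
    (Q : X → PMF Y)
    (hinv : CausallyInvariant G Q)
    (hmin : ∀ Q' : X → PMF Y, loss G L Ps Q ≤ loss G L Ps Q') :
    ∀ x : X, (∃ c n, 0 < Ps (c, n) ∧ 0 < G c n x) → Q x = L (φ x) := by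
  classical
  intro x₀ ⟨c₀, n₀, hP0, hG0⟩
  set t : (C × N) × X → ℝ≥0∞ := fun i =>
    Ps i.1 * G i.1.1 i.1.2 i.2 * ∑ y, L i.1.1 y * neglog (Q i.2 y) with ht
  set u : (C × N) × X → ℝ≥0∞ := fun i =>
    Ps i.1 * G i.1.1 i.1.2 i.2 * ∑ y, L i.1.1 y * neglog (L (φ i.2) y) with hu
  have hloss : ∀ (R : X → PMF Y), loss G L Ps R
      = ∑ i : (C × N) × X, Ps i.1 * G i.1.1 i.1.2 i.2 * ∑ y, L i.1.1 y * neglog (R i.2 y) := by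
    intro R
    rw [loss, Fintype.sum_prod_type, Fintype.sum_prod_type]
    simp [Finset.mul_sum, mul_assoc]
  have hsum : ∑ i, t i ≤ ∑ i, u i := by
    rw [← hloss Q, ← hloss (fun x => L (φ x))]
    exact hmin _
  have hpt : ∀ i, u i ≤ t i := by
    rintro ⟨⟨c, n⟩, x⟩
    by_cases hG : G c n x = 0
    · simp [ht, hu, hG]
    · have hc : φ x = c := hφ c n x (pos_iff_ne_zero.mpr hG)
      simp only [ht, hu, hc]
      exact mul_le_mul_right (ce_ge (L c) (Q x)) _
  have hfin : ∑ i, u i ≠ ⊤ := by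
    apply ENNReal.sum_ne_top.mpr
    rintro ⟨⟨c, n⟩, x⟩ -
    by_cases hG : G c n x = 0
    · simp [hu, hG]
    · have hc : φ x = c := hφ c n x (pos_iff_ne_zero.mpr hG)
      simp only [hu, hc]
      exact ENNReal.mul_ne_top
        (ENNReal.mul_ne_top (Ps.apply_ne_top _) ((G c n).apply_ne_top _))
        (by rw [ce_eq_ofReal (L c) (L c) (fun _ h => h)]; exact ENNReal.ofReal_ne_top)
  have hle := point_le hpt hsum hfin ((c₀, n₀), x₀)
  have hc₀ : φ x₀ = c₀ := hφ c₀ n₀ x₀ hG0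
  simp only [ht, hu, hc₀] at hle
  have hw : Ps (c₀, n₀) * G c₀ n₀ x₀ ≠ 0 := by
    exact mul_ne_zero hP0.ne' hG0.ne'
  have hwt : Ps (c₀, n₀) * G c₀ n₀ x₀ ≠ ⊤ :=
    ENNReal.mul_ne_top (Ps.apply_ne_top _) ((G c₀ n₀).apply_ne_top _)
  have hce := (ENNReal.mul_le_mul_iff_right hw hwt).mp hle
  rw [hc₀]
  exact ce_eq_of_le (L c₀) (Q x₀) hce

end CLD
end
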